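/- Let 𝔉 be an iterated graph system. Then 𝔉 satisfies conditions (GR1) and (GR2) if and only if its replacement graphs have uniformly bounded degree, i.e. sup_{m ∈ ℕ, w ∈ W_m} deg_{G_m}(w) < ∞, where deg_{G_m}(w) is the number of v ∈ W_m with {w,v} ∈ E_m. -/

import Mathlib

namespace IGSP

/-- An iterated graph system: a finite connected oriented graph `G₁ = (S, E)`, a set of
types `T` with a surjective typing map on edges, and nonempty gluing rules `I_t ⊆ S × S`. -/
structure System (S T : Type) where
  E : S → S → Prop
  not_both : ∀ x y : S, E x y → ¬ E y x
  irrefl : ∀ x : S, ¬ E x x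
  conn : ∀ x y : S, Relation.ReflTransGen (fun a b => E a b ∨ E b a) x y
  typ : S → S → T
  typ_surj : ∀ t : T, ∃ x y, E x y ∧ typ x y = t
  glue : T → S → S → Prop
  glue_nonempty : ∀ t : T, ∃ x y, glue t x y

variable {S T : Type}

/-- Words of length `m` over the symbol set `S`. -/
abbrev Word (S : Type) (m : ℕ) := Fin m → S

open Classical in
/-- The replacement graphs together with their typing functions, defined by recursion on
the length of words: `G₁ = (S,E)` and an oriented edge `(w,v) ∈ E_{m+1}` holds iff either
the length-`m` prefixes agree and the last symbols form an edge of `G₁`, or the prefixes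
form an edge of `E_m` and the last symbols belong to the gluing rule of its type. -/
noncomputable def replData [Nonempty T] (F : System S T) :
    (L : ℕ) → (Word S L → Word S L → Prop) × (Word S L → Word S L → T)
  | 0 => ⟨fun _ _ => False, fun _ _ => Classical.arbitrary T⟩
  | 1 => ⟨fun w v => F.E (w 0) (v 0), fun w v => F.typ (w 0) (v 0)⟩
  | L + 2 =>
      ⟨fun w v =>
        (Fin.init w = Fin.init v ∧ F.E (w (Fin.last (L + 1))) (v (Fin.last (L + 1)))) ∨
        ((replData F (L + 1)).1 (Fin.init w) (Fin.init v) ∧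
          F.glue ((replData F (L + 1)).2 (Fin.init w) (Fin.init v))
            (w (Fin.last (L + 1))) (v (Fin.last (L + 1)))),
       fun w v =>
        if Fin.init w = Fin.init v then F.typ (w (Fin.last (L + 1))) (v (Fin.last (L + 1)))
        else (replData F (L + 1)).2 (Fin.init w) (Fin.init v)⟩

/-- The oriented edge relation of the replacement graph on words of length `L`. -/
def edge [Nonempty T] (F : System S T) (L : ℕ) (w v : Word S L) : Prop :=
  (replData F L).1 w v

/-- The typing function of the replacement graph on words of length `L`. -/
noncomputable def etyp [Nonempty T] (F : System S T) (L : ℕ) (w v : Word S L) : T :=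
  (replData F L).2 w v

/-- The unoriented edge ("{w,v} ∈ E_L") relation. -/
def adjW [Nonempty T] (F : System S T) (L : ℕ) (w v : Word S L) : Prop :=
  edge F L w v ∨ edge F L v w

/-- The replacement graph `G_L` as a simple graph on words of length `L`. -/
noncomputable def replGraph [Nonempty T] (F : System S T) (L : ℕ) : SimpleGraph (Word S L) where
  Adj w v := w ≠ v ∧ adjW F L w v
  symm := by
    refine ⟨?_⟩
    intro w v h
    exact ⟨Ne.symm h.1, Or.symm h.2⟩
  loopless := by
    refine ⟨?_⟩
    intro w h
    exact h.1 rfl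

/-- The degree of a word `w` in the replacement graph `G_L`: the number of `v` with
`{w,v} ∈ E_L`. -/
noncomputable def degGm [Nonempty T] (F : System S T) (L : ℕ) (w : Word S L) : ℕ :=
  {v : Word S L | adjW F L w v}.ncard

/-- `I_{t,+}`, the set of symbols occurring as the first coordinate of the gluing rule. -/
def Iplus (F : System S T) (t : T) : Set S := {a | ∃ b, F.glue t a b}

/-- `I_{t,-}`, the set of symbols occurring as the second coordinate of the gluing rule. -/
def Iminus (F : System S T) (t : T) : Set S := {b | ∃ a, F.glue t a b}

/-- `I_{t,★}` where the orientation `★` is encoded by a boolean: `true = +`, `false = -`. -/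
def Iset (F : System S T) (t : T) : Bool → Set S
  | true => Iplus F t
  | false => Iminus F t

/-- `I_{t,★}^{(m)} = (I_{t,★})^m ⊆ W_m`. -/
def IsetW (F : System S T) (t : T) (b : Bool) (m : ℕ) : Set (Word S m) :=
  {w | ∀ i, w i ∈ Iset F t b}

/-- The boundary `∂G_m = ⋃_{(t,★)} I_{t,★}^{(m)}`. -/
def boundaryW (F : System S T) (m : ℕ) : Set (Word S m) :=
  ⋃ (t : T) (b : Bool), IsetW F t b m

/-- (GR1): every symbol has at most one gluing partner for each type and orientation. -/
def GR1 (F : System S T) : Prop :=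
  ∀ (t : T) (s : S), {b | F.glue t s b}.Subsingleton ∧ {a | F.glue t a s}.Subsingleton

/-- (GR2): for no type, orientation and symbol are the gluing-partner count and the
corresponding oriented degree in `G₁` simultaneously nonzero. -/
def GR2 (F : System S T) : Prop :=
  ∀ (t : T) (s : S),
    ¬ ((∃ b, F.glue t s b) ∧ ∃ b, F.E s b ∧ F.typ s b = t) ∧
    ¬ ((∃ a, F.glue t a s) ∧ ∃ a, F.E a s ∧ F.typ a s = t)

/-- (GR3): `I_{t,-} ∩ I_{t,+} = ∅` for every type `t`. -/
def GR3 (F : System S T) : Prop := ∀ t : T, Iminus F t ∩ Iplus F t = ∅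

/-- Assumption (GR). -/
def GR (F : System S T) : Prop := GR1 F ∧ GR2 F ∧ GR3 F

/-- A path in the replacement graph `G_L`: a nonempty list of words with consecutive
entries joined by an edge. -/
def IsPath [Nonempty T] (F : System S T) (L : ℕ) (θ : List (Word S L)) : Prop :=
  θ ≠ [] ∧ θ.Chain' (adjW F L)

open Classical in
/-- The projection `π_{L,k}` of a path: take length-`k` prefixes and remove consecutive
repetitions. -/
noncomputable def proj {k L : ℕ} (h : k ≤ L) (θ : List (Word S L)) : List (Word S k) :=
  (θ.map fun w => fun i => w (Fin.castLE h i)).destutter (· ≠ ·)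

/-- An intersection path in `G_{m+1}`: a path admitting a compatible sequence of paths at
all levels with uniformly bounded lengths. -/
def IsIntersectionPath [Nonempty T] (F : System S T) (m : ℕ) (θ : List (Word S (m + 1))) :
    Prop :=
  IsPath F (m + 1) θ ∧
  ∃ Θ : (n : ℕ) → List (Word S (n + 1)),
    Θ m = θ ∧ (∀ n, IsPath F (n + 1) (Θ n)) ∧
    (∀ (k n : ℕ) (h : k ≤ n), proj (Nat.succ_le_succ h) (Θ n) = Θ k) ∧
    ∃ C : ℕ, ∀ n, (Θ n).length ≤ C

/-- The fundamental neighbourhood `𝒩(w)`. -/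
def nbhd [Nonempty T] (F : System S T) (m : ℕ) (w : Word S (m + 1)) :
    Set (Word S (m + 1)) :=
  {v | ∃ θ, IsIntersectionPath F m θ ∧ θ.head? = some w ∧ θ.getLast? = some v}

/-- Bounded geometry: the diameters of fundamental neighbourhoods are uniformly bounded. -/
def BoundedGeometry [Nonempty T] (F : System S T) : Prop :=
  ∃ D : ℕ, ∀ (m : ℕ) (w : Word S (m + 1)), ∀ v₁ ∈ nbhd F m w, ∀ v₂ ∈ nbhd F m w,
    (replGraph F (m + 1)).dist v₁ v₂ ≤ D

/-- `|w ∧ v| < L` for words of length `L`: the words differ at some index below the last. -/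
def ncRel {L : ℕ} (w v : Word S L) : Prop := ∃ j : Fin L, (j : ℕ) + 1 < L ∧ w j ≠ v j

/-- A non-collapsing path: consecutive vertices satisfy `|w ∧ v| < L`. -/
def NonCollapsing {L : ℕ} (θ : List (Word S L)) : Prop := θ.Chain' ncRel

/-- A mapping between iterated graph systems. -/
structure Hom {S T S' T' : Type} (F : System S T) (F' : System S' T') where
  toFun : S → S'
  map_edge : ∀ x y, (F.E x y ∨ F.E y x) →
    (toFun x = toFun y ∨ F'.E (toFun x) (toFun y) ∨ F'.E (toFun y) (toFun x))
  glue_collapse : ∀ w1 v1, F.E w1 v1 → toFun w1 = toFun v1 →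
    ∀ w2 v2, F.glue (F.typ w1 v1) w2 v2 → toFun w2 = toFun v2
  glue_fwd : ∀ w1 v1, F.E w1 v1 → F'.E (toFun w1) (toFun v1) →
    ∀ w2 v2, F.glue (F.typ w1 v1) w2 v2 →
      F'.glue (F'.typ (toFun w1) (toFun v1)) (toFun w2) (toFun v2)
  glue_rev : ∀ w1 v1, F.E w1 v1 → F'.E (toFun v1) (toFun w1) →
    ∀ w2 v2, F.glue (F.typ w1 v1) w2 v2 →
      F'.glue (F'.typ (toFun v1) (toFun w1)) (toFun v2) (toFun w2)

/-- An isomorphism between iterated graph systems: a pair of mutually inverse mappings. -/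
structure Iso {S T S' T' : Type} (F : System S T) (F' : System S' T') where
  hom : Hom F F'
  inv : Hom F' F
  left_inv : ∀ x, inv.toFun (hom.toFun x) = x
  right_inv : ∀ y, hom.toFun (inv.toFun y) = y

/-- A flipping symmetry of type `t`. -/
def IsFlip (F : System S T) (t : T) (η : Iso F F) : Prop :=
  (∀ w ∈ Iplus F t, F.glue t w (η.hom.toFun w)) ∧
  (∀ v ∈ Iminus F t, F.glue t (η.hom.toFun v) v)

/-- The data of a reflection symmetry of an iterated graph system: an involutive
isomorphism together with the partition `S = C ∪ D ∪ Δ` satisfying (D1)-(D4). -/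
structure ReflData (F : System S T) where
  iso : Iso F F
  C : Set S
  D : Set S
  invol : ∀ x, iso.hom.toFun (iso.hom.toFun x) = x
  C_not_fixed : ∀ x ∈ C, iso.hom.toFun x ≠ x
  D_not_fixed : ∀ x ∈ D, iso.hom.toFun x ≠ x
  CD_disjoint : ∀ x, ¬ (x ∈ C ∧ x ∈ D)
  cover : ∀ x, x ∈ C ∨ x ∈ D ∨ iso.hom.toFun x = x
  image_C : iso.hom.toFun '' C = D
  edge_CD : ∀ x ∈ C, ∀ y ∈ D, (F.E x y ∨ F.E y x) → iso.hom.toFun x = y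
  D2 : ∀ w1 v1, F.E w1 v1 → iso.hom.toFun v1 = v1 →
    (w1 ∈ C → Iminus F (F.typ w1 v1) ⊆ C ∪ {x | iso.hom.toFun x = x}) ∧
    (w1 ∈ D → Iminus F (F.typ w1 v1) ⊆ D ∪ {x | iso.hom.toFun x = x})
  D3 : ∀ w1 v1, F.E w1 v1 → iso.hom.toFun w1 = w1 →
    (v1 ∈ C → Iplus F (F.typ w1 v1) ⊆ C ∪ {x | iso.hom.toFun x = x}) ∧
    (v1 ∈ D → Iplus F (F.typ w1 v1) ⊆ D ∪ {x | iso.hom.toFun x = x})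
  D4 : ∀ w1 v1, F.E w1 v1 → iso.hom.toFun w1 = w1 → iso.hom.toFun v1 = v1 →
    ∀ w2 v2, F.glue (F.typ w1 v1) w2 v2 →
      (w2 ∈ C ∧ v2 ∈ C) ∨ (w2 ∈ D ∧ v2 ∈ D) ∨
      (iso.hom.toFun w2 = w2 ∧ iso.hom.toFun v2 = v2)

/-- (D5): a reflection symmetry. -/
def IsRefl {F : System S T} (R : ReflData F) : Prop :=
  ∀ w1 v1, F.E w1 v1 → w1 ∈ R.C → v1 ∈ R.D →
    ∀ w2 v2, F.glue (F.typ w1 v1) w2 v2 → R.iso.hom.toFun w2 = v2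

/-- (D5*): a separative reflection symmetry. -/
def IsSepRefl {F : System S T} (R : ReflData F) : Prop :=
  ∀ x ∈ R.C, ∀ y ∈ R.D, ¬ (F.E x y ∨ F.E y x)

/-- The coordinatewise action of a reflection symmetry on words. -/
def wordMap {F : System S T} (R : ReflData F) {m : ℕ} (w : Word S m) : Word S m :=
  fun i => R.iso.hom.toFun (w i)

/-- The lifted set `C_α^{(m)}`: words whose first non-fixed coordinate lies in `C`. -/
def liftC {F : System S T} (R : ReflData F) (m : ℕ) : Set (Word S m) :=
  {w | ∃ k : Fin m, w k ∈ R.C ∧ ∀ j < k, R.iso.hom.toFun (w j) = w j}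

/-- The lifted set `D_α^{(m)}`: words whose first non-fixed coordinate lies in `D`. -/
def liftD {F : System S T} (R : ReflData F) (m : ℕ) : Set (Word S m) :=
  {w | ∃ k : Fin m, w k ∈ R.D ∧ ∀ j < k, R.iso.hom.toFun (w j) = w j}

end IGSP
namespace IGSP

variable {S T : Type}

/-- An antisymmetric function supported on the edges of a graph. -/
def Antisym {V : Type} (G : SimpleGraph V) (Φ : V → V → ℝ) : Prop :=
  (∀ x y, Φ x y = - Φ y x) ∧ ∀ x y, ¬ G.Adj x y → Φ x y = 0

/-- The divergence of `Φ` at a vertex. -/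
noncomputable def fdiv {V : Type} (Φ : V → V → ℝ) (x : V) : ℝ := ∑ᶠ y, Φ x y

/-- A flow from `A` to `B`. -/
def IsFlow {V : Type} (G : SimpleGraph V) (A B : Set V) (Φ : V → V → ℝ) : Prop :=
  Antisym G Φ ∧ ∀ x, x ∉ A ∪ B → fdiv Φ x = 0

/-- The total flow `I(Φ) = Σ_{x ∈ A} div Φ (x)`. -/
noncomputable def totalFlow {V : Type} (A : Set V) (Φ : V → V → ℝ) : ℝ :=
  ∑ᶠ x ∈ A, fdiv Φ x

/-- The `q`-energy `E_q(Φ) = Σ_{{x,y} ∈ E} |Φ(x,y)|^q` (each unordered edge counted once). -/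
noncomputable def energy {V : Type} (q : ℝ) (Φ : V → V → ℝ) : ℝ :=
  (∑ᶠ x, ∑ᶠ y, |Φ x y| ^ q) / 2

/-- The degree of a vertex of a graph. -/
noncomputable def degOf {V : Type} (G : SimpleGraph V) (x : V) : ℕ := {y | G.Adj x y}.ncard

/-- The maximal degree of a finite graph. -/
noncomputable def maxDeg {V : Type} [Fintype V] (G : SimpleGraph V) : ℕ :=
  Finset.univ.sup fun x => degOf G x

/-- The diameter of a finite graph (in the shortest-path metric). -/
noncomputable def gdiam {V : Type} [Fintype V] (G : SimpleGraph V) : ℕ :=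
  Finset.univ.sup fun pr : V × V => G.dist pr.1 pr.2

/-- The set of vertices of a path. -/
def pathVerts {V : Type} (θ : List V) : Set V := {x | x ∈ θ}

/-- A density is admissible for a path family if it is nonnegative and its sum along
every path of the family is at least 1. -/
def Admissible {V : Type} (Θ : Set (List V)) (ρ : V → ℝ) : Prop :=
  (∀ x, 0 ≤ ρ x) ∧ ∀ θ ∈ Θ, 1 ≤ ∑ᶠ x ∈ pathVerts θ, ρ x

/-- The discrete (vertex) `p`-modulus of a family of paths. -/
noncomputable def modulus {V : Type} (p : ℝ) (Θ : Set (List V)) : ℝ :=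
  sInf {M | ∃ ρ : V → ℝ, Admissible Θ ρ ∧ M = ∑ᶠ x, ρ x ^ p}

/-- The `p`-resistance `E_q(A,B,G)`: infimal `q`-energy of unit flows from `A` to `B`. -/
noncomputable def resistance {V : Type} (q : ℝ) (G : SimpleGraph V) (A B : Set V) : ℝ :=
  sInf {e | ∃ Φ, IsFlow G A B Φ ∧ totalFlow A Φ = 1 ∧ e = energy q Φ}

/-- The family `Θ_𝔞^{(m)}` of paths in `G_m` from `I_{t₁,★₁}^{(m)}` to `I_{t₂,★₂}^{(m)}`. -/
def ThetaIGS [Nonempty T] (F : System S T) (m : ℕ) (t₁ : T) (b₁ : Bool) (t₂ : T)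
    (b₂ : Bool) : Set (List (Word S m)) :=
  {θ | IsPath F m θ ∧ (∃ w ∈ IsetW F t₁ b₁ m, θ.head? = some w) ∧
    ∃ v ∈ IsetW F t₂ b₂ m, θ.getLast? = some v}

/-- `ℒ^{(m)}`, the collection of sets `I_{t,★}^{(m)}`. -/
def scriptL [Nonempty T] (F : System S T) (m : ℕ) : Set (Set (Word S m)) :=
  {A | ∃ (t : T) (b : Bool), A = IsetW F t b m}

/-- The added vertices `v_L` (for `L ∈ ℒ^{(m)}` and `v ∈ L`) of the graph `G̃_m`. -/
def AddedV [Nonempty T] (F : System S T) (m : ℕ) :=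
  {pr : Set (Word S m) × Word S m // pr.1 ∈ scriptL F m ∧ pr.2 ∈ pr.1}

/-- The vertex set of the graph `G̃_m`. -/
def TildeV [Nonempty T] (F : System S T) (m : ℕ) := Word S m ⊕ AddedV F m

/-- The graph `G̃_m`, obtained from `G_m` by attaching a pendant vertex `v_L` at every
`v ∈ L` for every `L ∈ ℒ^{(m)}`. -/
noncomputable def tildeG [Nonempty T] (F : System S T) (m : ℕ) : SimpleGraph (TildeV F m) where
  Adj x y :=
    match x, y with
    | Sum.inl w, Sum.inl v => w ≠ v ∧ adjW F m w v
    | Sum.inl w, Sum.inr pr => pr.1.2 = w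
    | Sum.inr pr, Sum.inl w => pr.1.2 = w
    | Sum.inr _, Sum.inr _ => False
  symm := by
    refine ⟨?_⟩
    rintro (w | pr) (v | qr) h
    · exact ⟨Ne.symm h.1, Or.symm h.2⟩
    · exact h
    · exact h
    · exact h.elim
  loopless := by
    refine ⟨?_⟩
    rintro (w | pr) h
    · exact h.1 rfl
    · exact h

/-- The set `L̃ = {v_L : v ∈ L}` of added vertices over `L`. -/
def tildeSet [Nonempty T] (F : System S T) (m : ℕ) (L : Set (Word S m)) :
    Set (TildeV F m) :=
  {x | ∃ pr : AddedV F m, pr.1.1 = L ∧ x = Sum.inr pr}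

/-- A flow basis on `G̃_m`: a family of unit flows between the added vertex sets of all
pairs of distinct members of `ℒ^{(m)}`, satisfying (FB1)–(FB4). -/
structure FlowBasis [Nonempty T] (F : System S T) (ηfam : T → Iso F F) (m : ℕ) where
  flow : (L₁ L₂ : Set (Word S m)) → L₁ ∈ scriptL F m → L₂ ∈ scriptL F m → L₁ ≠ L₂ →
    TildeV F m → TildeV F m → ℝ
  flow_isFlow : ∀ (L₁ L₂ : Set (Word S m)) (h₁ : L₁ ∈ scriptL F m) (h₂ : L₂ ∈ scriptL F m)
    (hne : L₁ ≠ L₂),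
    IsFlow (tildeG F m) (tildeSet F m L₁) (tildeSet F m L₂) (flow L₁ L₂ h₁ h₂ hne)
  flow_unit : ∀ (L₁ L₂ : Set (Word S m)) (h₁ : L₁ ∈ scriptL F m) (h₂ : L₂ ∈ scriptL F m)
    (hne : L₁ ≠ L₂), totalFlow (tildeSet F m L₁) (flow L₁ L₂ h₁ h₂ hne) = 1
  fb2 : ∀ (L₁ L₂ : Set (Word S m)) (h₁ : L₁ ∈ scriptL F m) (h₂ : L₂ ∈ scriptL F m)
    (hne : L₁ ≠ L₂) (pr : AddedV F m), pr.1.1 ≠ L₁ → pr.1.1 ≠ L₂ →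
    flow L₁ L₂ h₁ h₂ hne (Sum.inr pr) (Sum.inl pr.1.2) = 0
  fb3_out : ∀ (L L₁ L₂ : Set (Word S m)) (hL : L ∈ scriptL F m) (h₁ : L₁ ∈ scriptL F m)
    (h₂ : L₂ ∈ scriptL F m) (hne₁ : L ≠ L₁) (hne₂ : L ≠ L₂) (pr : AddedV F m),
    pr.1.1 = L →
    flow L L₁ hL h₁ hne₁ (Sum.inr pr) (Sum.inl pr.1.2) =
      flow L L₂ hL h₂ hne₂ (Sum.inr pr) (Sum.inl pr.1.2)
  fb3_in : ∀ (L L₁ L₂ : Set (Word S m)) (hL : L ∈ scriptL F m) (h₁ : L₁ ∈ scriptL F m)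
    (h₂ : L₂ ∈ scriptL F m) (hne₁ : L₁ ≠ L) (hne₂ : L₂ ≠ L) (pr : AddedV F m),
    pr.1.1 = L →
    flow L₁ L h₁ hL hne₁ (Sum.inl pr.1.2) (Sum.inr pr) =
      flow L₂ L h₂ hL hne₂ (Sum.inl pr.1.2) (Sum.inr pr)
  fb4_flip : ∀ (t : T) (b : Bool) (h₁ : IsetW F t b m ∈ scriptL F m)
    (h₂ : IsetW F t (!b) m ∈ scriptL F m) (hne : IsetW F t b m ≠ IsetW F t (!b) m)
    (pr qr : AddedV F m), pr.1.1 = IsetW F t b m → qr.1.1 = IsetW F t (!b) m →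
    qr.1.2 = (fun i => (ηfam t).hom.toFun (pr.1.2 i)) →
    flow (IsetW F t b m) (IsetW F t (!b) m) h₁ h₂ hne (Sum.inr pr) (Sum.inl pr.1.2) =
      flow (IsetW F t b m) (IsetW F t (!b) m) h₁ h₂ hne (Sum.inl qr.1.2) (Sum.inr qr)
  fb4_sym : ∀ (t : T) (b : Bool) (h₁ : IsetW F t b m ∈ scriptL F m)
    (h₂ : IsetW F t (!b) m ∈ scriptL F m) (hne : IsetW F t b m ≠ IsetW F t (!b) m)
    (hne' : IsetW F t (!b) m ≠ IsetW F t b m) (pr : AddedV F m),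
    pr.1.1 = IsetW F t b m →
    flow (IsetW F t b m) (IsetW F t (!b) m) h₁ h₂ hne (Sum.inr pr) (Sum.inl pr.1.2) =
      flow (IsetW F t (!b) m) (IsetW F t b m) h₂ h₁ hne' (Sum.inl pr.1.2) (Sum.inr pr)

/-- The `q`-energy of a flow basis: the maximal energy of its members. -/
noncomputable def basisEnergy [Nonempty T] {F : System S T} {ηfam : T → Iso F F} {m : ℕ}
    (q : ℝ) (FB : FlowBasis F ηfam m) : ℝ :=
  sSup {e | ∃ (L₁ L₂ : Set (Word S m)) (h₁ : L₁ ∈ scriptL F m) (h₂ : L₂ ∈ scriptL F m)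
    (hne : L₁ ≠ L₂), e = energy q (FB.flow L₁ L₂ h₁ h₂ hne)}

open Classical in
/-- The twisted flow `T_α(F)` of Proposition "Twist flow". -/
noncomputable def Talpha [Nonempty T] {F : System S T} {m : ℕ} (R : ReflData F)
    (L₁ L₂' : Set (Word S m)) (A : TildeV F m ≃ TildeV F m)
    (Φ : TildeV F m → TildeV F m → ℝ) : TildeV F m → TildeV F m → ℝ := fun x y =>
  if (∃ w, x = Sum.inl w ∧ wordMap R w = w) ∧ (∃ w, y = Sum.inl w ∧ wordMap R w = w) then
    Φ x y
  else if ((∃ w, x = Sum.inl w ∧ w ∈ liftC R m) ∨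
        (∃ pr : AddedV F m, x = Sum.inr pr ∧ (pr.1.1 = L₁ ∨ pr.1.1 = L₂'))) ∨
      ((∃ w, y = Sum.inl w ∧ w ∈ liftC R m) ∨
        (∃ pr : AddedV F m, y = Sum.inr pr ∧ (pr.1.1 = L₁ ∨ pr.1.1 = L₂'))) then
    Φ x y + Φ (A.symm x) (A.symm y)
  else 0

end IGSP
namespace IGSP

/-- The symbol set of the ambient cubical system: `{1,…,L}^d × {1,…,s}` (0-indexed). -/
abbrev CSym (d L s : ℕ) := (Fin d → Fin L) × Fin s

/-- The ambient edge relation of type `t_j`. -/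
def ambE {d L s : ℕ} (j : Fin d) (w v : CSym d L s) : Prop :=
  (∀ i, i ≠ j → w.1 i = v.1 i) ∧ (v.1 j : ℕ) = (w.1 j : ℕ) + 1

/-- The ambient gluing rule of type `t_j`. -/
def ambI {d L s : ℕ} (j : Fin d) (w v : CSym d L s) : Prop :=
  (∀ i, i ≠ j → w.1 i = v.1 i) ∧ (w.1 j : ℕ) = L - 1 ∧ (v.1 j : ℕ) = 0 ∧ w.2 = v.2

/-- A symbol lying on the `j`-axis edge of the cube: all other coordinates extremal
and label `1`. -/
def onAxis {d L s : ℕ} (j : Fin d) (w : CSym d L s) : Prop :=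
  (∀ i, i ≠ j → ((w.1 i : ℕ) = 0 ∨ (w.1 i : ℕ) = L - 1)) ∧ (w.2 : ℕ) = 0

/-- The coordinate reflection `η_j : c_j ↦ L + 1 - c_j`. -/
def etaMap {d L s : ℕ} (j : Fin d) (w : CSym d L s) : CSym d L s :=
  ⟨fun i => if i = j then ⟨L - 1 - (w.1 j : ℕ), by have := (w.1 j).isLt; omega⟩ else w.1 i,
    w.2⟩

/-- The diagonal reflection `α_{j,k}^+` exchanging coordinates `j` and `k`. -/
def swapMap {d L s : ℕ} (j k : Fin d) (w : CSym d L s) : CSym d L s :=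
  ⟨fun i => if i = j then w.1 k else if i = k then w.1 j else w.1 i, w.2⟩

/-- The anti-diagonal reflection `α_{j,k}^-`. -/
def aswapMap {d L s : ℕ} (j k : Fin d) (w : CSym d L s) : CSym d L s :=
  ⟨fun i =>
    if i = j then ⟨L - 1 - (w.1 k : ℕ), by have := (w.1 k).isLt; omega⟩
    else if i = k then ⟨L - 1 - (w.1 j : ℕ), by have := (w.1 j).isLt; omega⟩
    else w.1 i, w.2⟩

/-- A cubical iterated graph system: a sub-system of the ambient system `𝔉(d,L,s)`
satisfying the conditions (C1)–(C4). -/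
structure CubicalIGS (d L s : ℕ) where
  hd : 1 ≤ d
  hL : 3 ≤ L
  hs : 1 ≤ s
  Symb : Set (CSym d L s)
  sys : System (↥Symb) (Fin d)
  edge_amb : ∀ x y : ↥Symb, sys.E x y → ambE (sys.typ x y) x.1 y.1
  glue_amb : ∀ (j : Fin d) (x y : ↥Symb), sys.glue j x y → ambI j x.1 y.1
  C1 : ∀ w : CSym d L s, (∃ j, onAxis j w) → w ∈ Symb
  C2 : ∀ (j : Fin d) (x y : ↥Symb), onAxis j x.1 → onAxis j y.1 → ambE j x.1 y.1 →
    sys.E x y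
  C3 : ∀ (j : Fin d) (x y : ↥Symb), onAxis j x.1 → onAxis j y.1 → ambI j x.1 y.1 →
    sys.glue j x y
  C4_eta : ∀ j : Fin d, ∃ ψ : Iso sys sys,
    ∀ x : ↥Symb, (ψ.hom.toFun x : CSym d L s) = etaMap j x.1
  C4_plus : ∀ j k : Fin d, j ≠ k → ∃ ψ : Iso sys sys,
    ∀ x : ↥Symb, (ψ.hom.toFun x : CSym d L s) = swapMap j k x.1
  C4_minus : ∀ j k : Fin d, j ≠ k → ∃ ψ : Iso sys sys,
    ∀ x : ↥Symb, (ψ.hom.toFun x : CSym d L s) = aswapMap j k x.1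

/-- The corner symbol `𝐤`: first coordinate `k`, all other coordinates `1`, label `1`. -/
def cornerSym {d L s : ℕ} (cub : CubicalIGS d L s) (k : Fin L) : ↥cub.Symb :=
  ⟨⟨fun i => if (i : ℕ) = 0 then k else ⟨0, by have := k.isLt; omega⟩,
      ⟨0, by have := cub.hs; omega⟩⟩, by
    apply cub.C1
    refine ⟨⟨0, cub.hd⟩, fun i hi => ?_, rfl⟩
    have hiv : (i : ℕ) ≠ 0 := fun h => hi (Fin.ext h)
    left
    simp [hiv]⟩

end IGSP
namespace IGSP

/-- The edge relation of the Sierpiński gasket IGS. -/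
abbrev gasketE (x y : Fin 3) : Prop :=
  (x = 0 ∧ y = 1) ∨ (x = 1 ∧ y = 2) ∨ (x = 0 ∧ y = 2)

/-- The Sierpiński gasket iterated graph system. -/
noncomputable def gasket : System (Fin 3) (Fin 3) where
  E := gasketE
  not_both := by decide
  irrefl := by decide
  conn := by
    have hadj : ∀ a b : Fin 3, a ≠ b → gasketE a b ∨ gasketE b a := by decide
    intro x y
    rcases eq_or_ne x y with rfl | h
    · exact Relation.ReflTransGen.refl
    · exact Relation.ReflTransGen.single (hadj x y h)
  typ := fun x y => if x = 0 ∧ y = 1 then 0 else if x = 1 ∧ y = 2 then 1 else 2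
  typ_surj := by decide
  glue := fun t x y =>
    (t = 0 ∧ x = 1 ∧ y = 0) ∨ (t = 1 ∧ x = 2 ∧ y = 1) ∨ (t = 2 ∧ x = 2 ∧ y = 0)
  glue_nonempty := by decide

open Fin.NatCast Fin.CommRing in
/-- The pentagonal Sierpiński carpet iterated graph system. -/
noncomputable def pentagon : System (Fin 5) (Fin 5) where
  E := fun x y => y = x + 1
  not_both := by decide
  irrefl := by decide
  conn := by
    intro x y
    have key : ∀ (k : ℕ) (z : Fin 5),
        Relation.ReflTransGen (fun a b : Fin 5 => b = a + 1 ∨ a = b + 1) z (z + (k : Fin 5)) := by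
      intro k
      induction k with
      | zero => intro z; simpa using Relation.ReflTransGen.refl
      | succ n ih =>
          intro z
          have h : ((n + 1 : ℕ) : Fin 5) = ((n : ℕ) : Fin 5) + 1 := by push_cast; ring
          rw [h, ← add_assoc]
          exact (ih z).tail (Or.inl rfl)
    have h2 := key ((y - x : Fin 5) : ℕ) x
    rw [Fin.cast_val_eq_self] at h2
    have h3 : x + (y - x) = y := by abel
    rwa [h3] at h2
  typ := fun x _ => x
  typ_surj := fun t => ⟨t, t + 1, rfl, rfl⟩
  glue := fun t x y => (x = t + 1 ∧ y = t) ∨ (x = t + 2 ∧ y = t + 4)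
  glue_nonempty := fun t => ⟨t + 1, t, Or.inl ⟨rfl, rfl⟩⟩

/-- The interval iterated graph system `𝔉(1, L)`. -/
noncomputable def intervalSys (L : ℕ) (hL : 3 ≤ L) : System (Fin L) Unit where
  E x y := (y : ℕ) = (x : ℕ) + 1
  not_both := by intro x y h h'; omega
  irrefl := by intro x h; omega
  conn := by
    have key : ∀ (k : ℕ) (hk : k < L),
        Relation.ReflTransGen (fun a b : Fin L => ((b : ℕ) = (a : ℕ) + 1) ∨ ((a : ℕ) = (b : ℕ) + 1))
          ⟨0, by omega⟩ ⟨k, hk⟩ := by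
      intro k
      induction k with
      | zero => intro hk; exact Relation.ReflTransGen.refl
      | succ n ih =>
          intro hk
          exact Relation.ReflTransGen.tail (ih (by omega)) (Or.inl rfl)
    intro x y
    have hsymm : Symmetric fun a b : Fin L => ((b : ℕ) = (a : ℕ) + 1) ∨ ((a : ℕ) = (b : ℕ) + 1) :=
      fun a b h => h.symm
    have hx := key x.val x.isLt
    have hy := key y.val y.isLt
    simp only [Fin.eta] at hx hy
    exact Relation.ReflTransGen.trans (@Relation.ReflTransGen.stdSymm _ _ ⟨hsymm⟩ |>.symm _ _ hx) hy
  typ := fun _ _ => ()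
  typ_surj := by
    intro t
    refine ⟨⟨0, by omega⟩, ⟨1, by omega⟩, rfl, ?_⟩
    cases t; rfl
  glue := fun _ x y => (x : ℕ) = L - 1 ∧ (y : ℕ) = 0
  glue_nonempty := fun _ => ⟨⟨L - 1, by omega⟩, ⟨0, by omega⟩, rfl, rfl⟩

variable {S T : Type}

/-- A folding of `G_{k+n}` onto `w̃ · W_n`: a graph mapping into the induced subgraph on
`w̃ · W_n` which fixes `w̃ · W_n` pointwise. -/
def HasFolding [Nonempty T] (F : System S T) (k n : ℕ) (wt : Word S k) : Prop :=
  ∃ f : Word S (k + n) → Word S (k + n),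
    (∀ x, ∃ u : Word S n, f x = Fin.append wt u) ∧
    (∀ u : Word S n, f (Fin.append wt u) = Fin.append wt u) ∧
    (∀ x y, adjW F (k + n) x y → f x = f y ∨ adjW F (k + n) (f x) (f y))

end IGSP

/-!
Unfolding the recursion, `(w, v) ∈ E_L` iff there is a level `j` at which `w` and `v` split:
they agree before `j`, `(w_j, v_j) ∈ E`, and `(w_i, v_i) ∈ I_t` for all `i > j`, where `t` is the
type of `(w_j, v_j)`. Under the `+` halves of (GR1) and (GR2) an out-neighbour `v` of `w` is
determined by the pair `(w_j, v_j)`: (GR2) forbids two different splitting levels with the same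
type, and (GR1) then fixes the letters after `j`. Hence out-degrees are at most `|S|²`, and
in-degrees are out-degrees of the reversed system. Conversely, if `s` has two `t`-partners
`b₁ ≠ b₂`, the word `x s ⋯ s` with `(x, y)` of type `t` has the `n` neighbours
`y b₁ ⋯ b₂ ⋯ b₁`; if `s` is `t`-glued to `c` and has an outgoing `t`-edge `(s, y)`, the constant
word `s ⋯ s` has the `n` neighbours `s ⋯ s y c ⋯ c`.
-/

namespace IGSP

variable {S T : Type}

def System.reverse (F : System S T) : System S T where
  E x y := F.E y x
  not_both x y h h' := F.not_both y x h h'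
  irrefl := F.irrefl
  conn x y := Relation.ReflTransGen.mono (fun _ _ => Or.symm) _ _ (F.conn x y)
  typ x y := F.typ y x
  typ_surj t := let ⟨x, y, h, ht⟩ := F.typ_surj t; ⟨y, x, h, ht⟩
  glue t x y := F.glue t y x
  glue_nonempty t := let ⟨x, y, h⟩ := F.glue_nonempty t; ⟨y, x, h⟩

/-- The `+` halves of (GR1) and (GR2). -/
def OutGR (F : System S T) : Prop :=
  ∀ t s, {b | F.glue t s b}.Subsingleton ∧
    ¬ ((∃ b, F.glue t s b) ∧ ∃ b, F.E s b ∧ F.typ s b = t)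

lemma GR1_and_GR2_iff {F : System S T} : GR1 F ∧ GR2 F ↔ OutGR F ∧ OutGR F.reverse := by
  simp only [GR1, GR2, OutGR, System.reverse, forall_and]
  tauto

/-- `(w, v) ∈ E_L` is an edge created at level `j`. -/
def IsEdgeAt (F : System S T) {L : ℕ} (w v : Word S L) (j : Fin L) : Prop :=
  (∀ i < j, w i = v i) ∧ F.E (w j) (v j) ∧
    ∀ i, j < i → F.glue (F.typ (w j) (v j)) (w i) (v i)

section IsEdgeAt

variable {F : System S T} {L : ℕ}

lemma isEdgeAt_reverse_iff {w v : Word S L} {j : Fin L} :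
    IsEdgeAt F.reverse w v j ↔ IsEdgeAt F v w j := by
  unfold IsEdgeAt
  exact and_congr_left' (forall₂_congr fun _ _ => eq_comm)

lemma isEdgeAt_last_iff {w v : Word S (L + 1)} :
    IsEdgeAt F w v (Fin.last L) ↔
      Fin.init w = Fin.init v ∧ F.E (w (Fin.last L)) (v (Fin.last L)) := by
  simp [IsEdgeAt, funext_iff, Fin.forall_fin_succ', Fin.init, Fin.castSucc_lt_last,
    fun i => not_lt.2 (Fin.le_last i)]

lemma isEdgeAt_castSucc_iff {w v : Word S (L + 1)} {j : Fin L} :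
    IsEdgeAt F w v j.castSucc ↔
      IsEdgeAt F (Fin.init w) (Fin.init v) j ∧
        F.glue (F.typ (w j.castSucc) (v j.castSucc)) (w (Fin.last L)) (v (Fin.last L)) := by
  simp [IsEdgeAt, Fin.forall_fin_succ', Fin.init, Fin.castSucc_lt_last, and_assoc,
    fun i => not_lt.2 (Fin.le_last i)]

lemma not_lt_of_isEdgeAt (hF : OutGR F) {w v₁ v₂ : Word S L} {j₁ j₂ : Fin L}
    (h₁ : IsEdgeAt F w v₁ j₁) (h₂ : IsEdgeAt F w v₂ j₂)
    (ht : F.typ (w j₁) (v₁ j₁) = F.typ (w j₂) (v₂ j₂)) : ¬ j₁ < j₂ :=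
  fun hlt => (hF _ (w j₂)).2 ⟨⟨_, h₁.2.2 j₂ hlt⟩, _, h₂.2.1, ht.symm⟩

lemma eq_of_isEdgeAt (hF : OutGR F) {w v₁ v₂ : Word S L} {j₁ j₂ : Fin L}
    (h₁ : IsEdgeAt F w v₁ j₁) (h₂ : IsEdgeAt F w v₂ j₂)
    (hw : w j₁ = w j₂) (hv : v₁ j₁ = v₂ j₂) : v₁ = v₂ := by
  have ht : F.typ (w j₁) (v₁ j₁) = F.typ (w j₂) (v₂ j₂) := by rw [hw, hv]
  obtain rfl : j₁ = j₂ := le_antisymm (not_lt.1 (not_lt_of_isEdgeAt hF h₂ h₁ ht.symm))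
    (not_lt.1 (not_lt_of_isEdgeAt hF h₁ h₂ ht))
  funext i
  rcases lt_trichotomy i j₁ with hi | rfl | hi
  · rw [← h₁.1 i hi, h₂.1 i hi]
  · exact hv
  · exact (hF _ (w i)).1 (h₁.2.2 i hi) (hv ▸ h₂.2.2 i hi)

end IsEdgeAt

section ReplacementGraph

variable [Nonempty T] {F : System S T}

lemma edge_succ_succ_iff {L : ℕ} {w v : Word S (L + 2)} :
    edge F (L + 2) w v ↔
      (Fin.init w = Fin.init v ∧ F.E (w (Fin.last _)) (v (Fin.last _))) ∨
      (edge F (L + 1) (Fin.init w) (Fin.init v) ∧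
        F.glue (etyp F (L + 1) (Fin.init w) (Fin.init v)) (w (Fin.last _)) (v (Fin.last _))) :=
  Iff.rfl

open Classical in
lemma etyp_succ_succ {L : ℕ} (w v : Word S (L + 2)) :
    etyp F (L + 2) w v = if Fin.init w = Fin.init v
      then F.typ (w (Fin.last _)) (v (Fin.last _))
      else etyp F (L + 1) (Fin.init w) (Fin.init v) :=
  rfl

lemma etyp_eq_of_eq_of_lt : ∀ {L : ℕ} {w v : Word S L} {j : Fin L},
    (∀ i < j, w i = v i) → w j ≠ v j → etyp F L w v = F.typ (w j) (v j)
  | 0, _, _, j, _, _ => j.elim0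
  | 1, _, _, j, _, _ => by rw [Subsingleton.elim j 0]; rfl
  | L + 2, w, v, j, hlow, hne => by
    rw [etyp_succ_succ]
    rcases Fin.eq_castSucc_or_eq_last j with ⟨j, rfl⟩ | rfl
    · have hinit : Fin.init w ≠ Fin.init v := fun h => hne (congrFun h j)
      rw [if_neg hinit]
      exact etyp_eq_of_eq_of_lt (fun i hi => hlow _ (Fin.castSucc_lt_castSucc_iff.2 hi)) hne
    · have hinit : Fin.init w = Fin.init v := funext fun i => hlow _ (Fin.castSucc_lt_last i)
      rw [if_pos hinit]

theorem edge_iff_exists_isEdgeAt : ∀ {L : ℕ} {w v : Word S L},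
    edge F L w v ↔ ∃ j, IsEdgeAt F w v j
  | 0, _, _ => by simp [edge, replData]
  | 1, w, v => by simp [edge, replData, IsEdgeAt, Fin.exists_fin_one]
  | L + 2, w, v => by
    rw [edge_succ_succ_iff, Fin.exists_fin_succ', isEdgeAt_last_iff, or_comm,
      edge_iff_exists_isEdgeAt]
    refine or_congr ⟨?_, ?_⟩ Iff.rfl
    · rintro ⟨⟨j, hj⟩, hglue⟩
      refine ⟨j, isEdgeAt_castSucc_iff.2 ⟨hj, ?_⟩⟩
      rwa [etyp_eq_of_eq_of_lt hj.1 (fun h => F.irrefl _ (h ▸ hj.2.1))] at hglue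
    · rintro ⟨j, hj⟩
      obtain ⟨hj, hglue⟩ := isEdgeAt_castSucc_iff.1 hj
      refine ⟨⟨j, hj⟩, ?_⟩
      rwa [etyp_eq_of_eq_of_lt hj.1 (fun h => F.irrefl _ (h ▸ hj.2.1))]

lemma edge_reverse_iff {L : ℕ} {w v : Word S L} : edge F.reverse L w v ↔ edge F L v w := by
  simp only [edge_iff_exists_isEdgeAt, isEdgeAt_reverse_iff]

lemma degGm_reverse (L : ℕ) (w : Word S L) : degGm F.reverse L w = degGm F L w := by
  simp only [degGm, adjW, edge_reverse_iff, or_comm]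

lemma degGm_eq_ncard_union (L : ℕ) (w : Word S L) :
    degGm F L w = ({v | edge F L w v} ∪ {v | edge F.reverse L w v}).ncard := by
  simp only [degGm, adjW, edge_reverse_iff, Set.ofPred_or]

variable [Fintype S]

lemma ncard_edge_le (hF : OutGR F) {L : ℕ} (w : Word S L) :
    {v | edge F L w v}.ncard ≤ Fintype.card S * Fintype.card S := by
  choose j hj using fun v : {v | edge F L w v} => edge_iff_exists_isEdgeAt.1 v.2
  rw [← Nat.card_coe_set_eq, ← Fintype.card_prod, ← Nat.card_eq_fintype_card]
  refine Nat.card_le_card_of_injective (fun v => (w (j v), v.1 (j v))) fun v₁ v₂ h => ?_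
  exact Subtype.ext (eq_of_isEdgeAt hF (hj v₁) (hj v₂) (congrArg Prod.fst h) (congrArg Prod.snd h))

theorem degGm_le_of_outGR (hF : OutGR F) (hR : OutGR F.reverse) {L : ℕ} (w : Word S L) :
    degGm F L w ≤ 2 * (Fintype.card S * Fintype.card S) := by
  rw [degGm_eq_ncard_union]
  have := ncard_edge_le hF w
  have := ncard_edge_le hR w
  have := Set.ncard_union_le {v | edge F L w v} {v | edge F.reverse L w v}
  omega

lemma card_le_degGm {L n : ℕ} {w : Word S L} {g : Fin n → Word S L}
    (hg : Function.Injective g) (hadj : ∀ k, adjW F L w (g k)) : n ≤ degGm F L w := by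
  rw [← Fintype.card_fin n, ← Nat.card_eq_fintype_card, ← Set.ncard_range_of_injective hg]
  exact Set.ncard_le_ncard (Set.range_subset_iff.2 hadj) (Set.toFinite _)

lemma exists_le_degGm_of_glue_ne {t : T} {s b₁ b₂ : S} (h₁ : F.glue t s b₁)
    (h₂ : F.glue t s b₂) (hne : b₁ ≠ b₂) (n : ℕ) :
    ∃ w : Word S (n + 1), n ≤ degGm F (n + 1) w := by
  classical
  obtain ⟨x, y, hxy, rfl⟩ := F.typ_surj t
  set g : Fin n → Word S (n + 1) := fun k => Fin.cons y (Function.update (fun _ => b₁) k b₂)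
  have hg : Function.Injective g := fun k₁ k₂ h => by
    by_contra hk
    have := congrFun (Fin.cons_right_injective _ h) k₁
    simp [Function.update_of_ne hk] at this
    exact hne this.symm
  refine ⟨Fin.cons x fun _ => s, card_le_degGm hg fun k => Or.inl ?_⟩
  refine edge_iff_exists_isEdgeAt.2 ⟨0, fun i hi => absurd hi (Fin.not_lt_zero i), hxy,
    Fin.cases (fun h => absurd h (lt_irrefl 0)) fun i _ => ?_⟩
  simp only [g, Fin.cons_zero, Fin.cons_succ]
  rcases eq_or_ne i k with rfl | hi
  · simpa using h₂
  · simpa [Function.update_of_ne hi] using h₁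

lemma exists_le_degGm_of_glue_of_E {t : T} {s c y : S} (hc : F.glue t s c) (hy : F.E s y)
    (ht : F.typ s y = t) (n : ℕ) : ∃ w : Word S n, n ≤ degGm F n w := by
  classical
  set g : Fin n → Word S n := fun k i => if i < k then s else if i = k then y else c
  have hys : y ≠ s := fun h => F.irrefl s (h ▸ hy)
  have hg : ∀ k₁ k₂, g k₁ = g k₂ → ¬ k₁ < k₂ := fun k₁ k₂ h hlt =>
    hys (by simpa [g, hlt] using congrFun h k₁)
  refine ⟨fun _ => s, card_le_degGm (g := g)
    (fun k₁ k₂ h => le_antisymm (not_lt.1 (hg _ _ h.symm)) (not_lt.1 (hg _ _ h)))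
    fun k => Or.inl (edge_iff_exists_isEdgeAt.2 ⟨k, ?_⟩)⟩
  refine ⟨fun i hi => by simp [g, hi], by simpa [g] using hy, fun i hi => ?_⟩
  simpa [g, not_lt.2 hi.le, hi.ne', ht] using hc

lemma exists_le_degGm_of_not_outGR (h : ¬ OutGR F) (n : ℕ) :
    ∃ w : Word S (n + 1), n ≤ degGm F (n + 1) w := by
  simp only [OutGR, not_forall, not_and, not_not] at h
  obtain ⟨t, s, h⟩ := h
  by_cases hsub : {b | F.glue t s b}.Subsingleton
  · obtain ⟨⟨c, hc⟩, y, hy, ht⟩ := h hsub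
    obtain ⟨w, hw⟩ := exists_le_degGm_of_glue_of_E hc hy ht (n + 1)
    exact ⟨w, by omega⟩
  · simp only [Set.Subsingleton, not_forall] at hsub
    obtain ⟨b₁, h₁, b₂, h₂, hne⟩ := hsub
    exact exists_le_degGm_of_glue_ne h₁ h₂ hne n

lemma outGR_of_degGm_le {D : ℕ} (hD : ∀ (m : ℕ) (w : Word S (m + 1)), degGm F (m + 1) w ≤ D) :
    OutGR F := by
  by_contra h
  obtain ⟨w, hw⟩ := exists_le_degGm_of_not_outGR h (D + 1)
  have := hD _ w
  omega

end ReplacementGraph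

/-- An iterated graph system satisfies (GR1) and (GR2) if and only if its
replacement graphs have uniformly bounded degree. -/
theorem statement0 {S T : Type} [Fintype S] [Nonempty T] (F : System S T) :
    (GR1 F ∧ GR2 F) ↔
      ∃ D : ℕ, ∀ (m : ℕ) (w : Word S (m + 1)), degGm F (m + 1) w ≤ D := by
  rw [GR1_and_GR2_iff]
  constructor
  · rintro ⟨hF, hR⟩
    exact ⟨_, fun m w => degGm_le_of_outGR hF hR w⟩
  · rintro ⟨D, hD⟩
    refine ⟨outGR_of_degGm_le hD, outGR_of_degGm_le (D := D) fun m w => ?_⟩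
    rw [degGm_reverse]
    exact hD m w

end IGSP
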